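/- Distance comparison for the reflection map on epigraphs: let n ≥ 2, let f : ℝ^{n−1} → ℝ be Lipschitz with Lipschitz constant M, let D = {(x', x_n) : x_n > f(x')} be the epigraph supported by f, and for λ > 0 define Φ_λ^{-1}(x) = (x', f(x') + (1/λ)(f(x') − x_n)) for x = (x', x_n) ∈ D. Then there exists a constant C > 0, depending only on λ and M, such that |x − y| ≤ C |Φ_λ^{-1}(x) − y| for all x, y ∈ D. -/

import Mathlib

open MeasureTheory ENNReal

noncomputable section

/-- The `p`-th power of the Gagliardo `W^{s,p}` seminorm of `u` over `Ω`. -/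
def gagliardoPow {n : ℕ} (s p : ℝ) (Ω : Set (EuclideanSpace ℝ (Fin n)))
    (u : EuclideanSpace ℝ (Fin n) → EuclideanSpace ℝ (Fin n)) : ℝ≥0∞ :=
  ∫⁻ x in Ω, ∫⁻ y in Ω,
    ENNReal.ofReal (‖u x - u y‖ ^ p / ‖x - y‖ ^ ((n : ℝ) + s * p))

/-- The `p`-th power of the projected seminorm `[u]_{X^{s,p}(Ω)}`. -/
def projPow {n : ℕ} (s p : ℝ) (Ω : Set (EuclideanSpace ℝ (Fin n)))
    (u : EuclideanSpace ℝ (Fin n) → EuclideanSpace ℝ (Fin n)) : ℝ≥0∞ :=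
  ∫⁻ x in Ω, ∫⁻ y in Ω,
    ENNReal.ofReal (|(inner ℝ (u x - u y) (x - y) : ℝ)| ^ p / ‖x - y‖ ^ ((n : ℝ) + s * p + p))

/-- The `p`-th power of the `L^p(Ω)` norm. -/
def lpPow {n : ℕ} (p : ℝ) (Ω : Set (EuclideanSpace ℝ (Fin n)))
    (u : EuclideanSpace ℝ (Fin n) → EuclideanSpace ℝ (Fin n)) : ℝ≥0∞ :=
  ∫⁻ x in Ω, ENNReal.ofReal (‖u x‖ ^ p)

/-- `u ∈ W^{s,p}(Ω; ℝⁿ)`. -/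
def MemWsp {n : ℕ} (s p : ℝ) (Ω : Set (EuclideanSpace ℝ (Fin n)))
    (u : EuclideanSpace ℝ (Fin n) → EuclideanSpace ℝ (Fin n)) : Prop :=
  AEStronglyMeasurable u (volume.restrict Ω) ∧ lpPow p Ω u < ⊤ ∧ gagliardoPow s p Ω u < ⊤

/-- Infinitesimal rigid motions: `r x = A x + b` with `A` skew-symmetric. -/
def IsRigid {n : ℕ} (r : EuclideanSpace ℝ (Fin n) → EuclideanSpace ℝ (Fin n)) : Prop :=
  ∃ (A : Matrix (Fin n) (Fin n) ℝ) (b : EuclideanSpace ℝ (Fin n)),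
    A.transpose = -A ∧ ∀ x i, r x i = (∑ j, A i j * x j) + b i

/-- First `d` coordinates of a point of `ℝ^{d+1}`. -/
def fst' {d : ℕ} (x : EuclideanSpace ℝ (Fin (d+1))) : EuclideanSpace ℝ (Fin d) :=
  WithLp.toLp 2 (fun i => x i.castSucc)

/-- Last coordinate of a point of `ℝ^{d+1}`. -/
def lastc {d : ℕ} (x : EuclideanSpace ℝ (Fin (d+1))) : ℝ := x (Fin.last d)

/-- Assemble a point of `ℝ^{d+1}` from `x' ∈ ℝ^d` and a last coordinate `t`. -/
def mkPt {d : ℕ} (x' : EuclideanSpace ℝ (Fin d)) (t : ℝ) : EuclideanSpace ℝ (Fin (d+1)) :=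
  WithLp.toLp 2 (fun i => if h : (i : ℕ) < d then x' ⟨i, h⟩ else t)

/-- The open epigraph of `f : ℝ^d → ℝ`. -/
def epigraph {d : ℕ} (f : EuclideanSpace ℝ (Fin d) → ℝ) : Set (EuclideanSpace ℝ (Fin (d+1))) :=
  {x | f (fst' x) < lastc x}

/-- `Ω` is a Lipschitz domain with Lipschitz constant `≤ L`. -/
def IsLipschitzDomainLE {d : ℕ} (L : ℝ) (Ω : Set (EuclideanSpace ℝ (Fin (d+1)))) : Prop :=
  ∃ (m : ℕ) (c : Fin m → EuclideanSpace ℝ (Fin (d+1))) (ρ : Fin m → ℝ),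
    frontier Ω ⊆ ⋃ i, Metric.ball (c i) (ρ i) ∧
    ∀ i : Fin m, ∃ (T : EuclideanSpace ℝ (Fin (d+1)) ≃ᵢ EuclideanSpace ℝ (Fin (d+1)))
      (f : EuclideanSpace ℝ (Fin d) → ℝ),
      LipschitzWith L.toNNReal f ∧
      (∀ x ∈ frontier Ω ∩ Metric.ball (c i) (ρ i), lastc (T x) = f (fst' (T x))) ∧
      (∀ x ∈ Ω ∩ Metric.ball (c i) (ρ i), T x ∈ epigraph f)

/-- `u ∈ C¹_c(cl D; ℝⁿ)`. -/
def MemC1cCl {n : ℕ} (D : Set (EuclideanSpace ℝ (Fin n)))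
    (u : EuclideanSpace ℝ (Fin n) → EuclideanSpace ℝ (Fin n)) : Prop :=
  ContDiffOn ℝ 1 u (closure D) ∧ HasCompactSupport u ∧ tsupport u ⊆ closure D

/-! The reflected point `z = Φ_λ⁻¹(x)` lies straight below `x`, at depth `t/λ` under the graph,
where `t = x_n - f(x') > 0`, so `|x - z| = (1 + λ) t/λ`. Any `y ∈ D` lies above the graph, and
since `f` is `M`-Lipschitz the depth of `z` is at most `(1 + M) |z - y|`. The triangle inequality
through `z` then gives `|x - y| ≤ ((1 + λ)(1 + M) + 1) |z - y|`. -/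

open scoped NNReal

section Coordinates

variable {d : ℕ}

@[simp]
lemma fst'_mkPt (a : EuclideanSpace ℝ (Fin d)) (t : ℝ) : fst' (mkPt a t) = a := by
  ext i
  simp [fst', mkPt]

@[simp]
lemma lastc_mkPt (a : EuclideanSpace ℝ (Fin d)) (t : ℝ) : lastc (mkPt a t) = t := by
  simp [lastc, mkPt]

@[simp]
lemma fst'_sub (x y : EuclideanSpace ℝ (Fin (d+1))) : fst' (x - y) = fst' x - fst' y := by
  ext i
  simp [fst']

@[simp]
lemma lastc_sub (x y : EuclideanSpace ℝ (Fin (d+1))) : lastc (x - y) = lastc x - lastc y :=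
  rfl

lemma norm_sq_eq_norm_fst'_sq_add_lastc_sq (v : EuclideanSpace ℝ (Fin (d+1))) :
    ‖v‖ ^ 2 = ‖fst' v‖ ^ 2 + lastc v ^ 2 := by
  rw [EuclideanSpace.norm_sq_eq, EuclideanSpace.norm_sq_eq, Fin.sum_univ_castSucc]
  simp [fst', lastc]

lemma norm_fst'_le (v : EuclideanSpace ℝ (Fin (d+1))) : ‖fst' v‖ ≤ ‖v‖ := by
  refine (pow_le_pow_iff_left₀ (norm_nonneg _) (norm_nonneg _) two_ne_zero).1 ?_
  rw [norm_sq_eq_norm_fst'_sq_add_lastc_sq v]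
  exact le_add_of_nonneg_right (sq_nonneg _)

lemma abs_lastc_le (v : EuclideanSpace ℝ (Fin (d+1))) : |lastc v| ≤ ‖v‖ := by
  refine abs_le_of_sq_le_sq ?_ (norm_nonneg v)
  rw [norm_sq_eq_norm_fst'_sq_add_lastc_sq v]
  exact le_add_of_nonneg_left (sq_nonneg _)

lemma norm_sub_mkPt_fst' (x : EuclideanSpace ℝ (Fin (d+1))) (s : ℝ) :
    ‖x - mkPt (fst' x) s‖ = |lastc x - s| := by
  have h := norm_sq_eq_norm_fst'_sq_add_lastc_sq (x - mkPt (fst' x) s)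
  simp only [fst'_sub, fst'_mkPt, sub_self, norm_zero, lastc_sub, lastc_mkPt] at h
  rw [← abs_norm, ← sq_eq_sq_iff_abs_eq_abs, h]
  ring

end Coordinates

section Epigraph

variable {d : ℕ} {f : EuclideanSpace ℝ (Fin d) → ℝ}

lemma sub_lastc_le_of_mem_epigraph {K : ℝ≥0} (hf : LipschitzWith K f)
    {y : EuclideanSpace ℝ (Fin (d+1))} (hy : y ∈ epigraph f) (z : EuclideanSpace ℝ (Fin (d+1))) :
    f (fst' z) - lastc z ≤ (1 + K) * ‖z - y‖ := by
  have hlip : f (fst' z) - f (fst' y) ≤ K * ‖z - y‖ :=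
    calc f (fst' z) - f (fst' y) ≤ dist (f (fst' z)) (f (fst' y)) := le_abs_self _
      _ ≤ K * dist (fst' z) (fst' y) := hf.dist_le_mul _ _
      _ ≤ K * ‖z - y‖ := by
        rw [dist_eq_norm, ← fst'_sub]
        gcongr
        exact norm_fst'_le _
  have hlast : lastc y - lastc z ≤ ‖z - y‖ :=
    calc lastc y - lastc z ≤ |lastc (z - y)| := by
          rw [lastc_sub, abs_sub_comm]
          exact le_abs_self _
      _ ≤ ‖z - y‖ := abs_lastc_le _
  have hy' : f (fst' y) < lastc y := hy
  linarith

/-- The map `Φ_λ⁻¹` of the paper. -/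
def epiReflectInv (f : EuclideanSpace ℝ (Fin d) → ℝ) (lam : ℝ)
    (x : EuclideanSpace ℝ (Fin (d+1))) : EuclideanSpace ℝ (Fin (d+1)) :=
  mkPt (fst' x) (f (fst' x) + (1 / lam) * (f (fst' x) - lastc x))

lemma sub_lastc_epiReflectInv (lam : ℝ) (x : EuclideanSpace ℝ (Fin (d+1))) :
    f (fst' (epiReflectInv f lam x)) - lastc (epiReflectInv f lam x) =
      (lastc x - f (fst' x)) / lam := by
  simp only [epiReflectInv, fst'_mkPt, lastc_mkPt]
  ring

lemma norm_sub_epiReflectInv {lam : ℝ} (hlam : 0 < lam) {x : EuclideanSpace ℝ (Fin (d+1))}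
    (hx : x ∈ epigraph f) :
    ‖x - epiReflectInv f lam x‖ = (lam + 1) * ((lastc x - f (fst' x)) / lam) := by
  have ht : 0 < lastc x - f (fst' x) := sub_pos.2 hx
  have hgap : lastc x - (f (fst' x) + 1 / lam * (f (fst' x) - lastc x)) =
      (lam + 1) * ((lastc x - f (fst' x)) / lam) := by
    field_simp
    ring
  rw [epiReflectInv, norm_sub_mkPt_fst', hgap, abs_of_pos (by positivity)]

theorem norm_sub_le_mul_norm_epiReflectInv_sub {K : ℝ≥0} (hf : LipschitzWith K f) {lam : ℝ}
    (hlam : 0 < lam) {x y : EuclideanSpace ℝ (Fin (d+1))} (hx : x ∈ epigraph f)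
    (hy : y ∈ epigraph f) :
    ‖x - y‖ ≤ ((lam + 1) * (1 + K) + 1) * ‖epiReflectInv f lam x - y‖ := by
  set z := epiReflectInv f lam x
  have hdepth := sub_lastc_le_of_mem_epigraph hf hy z
  rw [sub_lastc_epiReflectInv] at hdepth
  calc ‖x - y‖ ≤ ‖x - z‖ + ‖z - y‖ := norm_sub_le_norm_sub_add_norm_sub _ _ _
    _ = (lam + 1) * ((lastc x - f (fst' x)) / lam) + ‖z - y‖ := by
      rw [norm_sub_epiReflectInv hlam hx]
    _ ≤ (lam + 1) * ((1 + K) * ‖z - y‖) + ‖z - y‖ := by gcongr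
    _ = ((lam + 1) * (1 + K) + 1) * ‖z - y‖ := by ring

end Epigraph

theorem dist_comparison_reflection_general
    (d : ℕ) (M : ℝ)
    (f : EuclideanSpace ℝ (Fin d) → ℝ) (hf : LipschitzWith M.toNNReal f)
    (lam : ℝ) (hlam : 0 < lam) :
    ∃ C : ℝ, 0 < C ∧
      ∀ x ∈ epigraph f, ∀ y ∈ epigraph f,
        ‖x - y‖ ≤
          C * ‖mkPt (fst' x) (f (fst' x) + (1 / lam) * (f (fst' x) - lastc x)) - y‖ :=
  ⟨_, by positivity, fun _ hx _ hy => norm_sub_le_mul_norm_epiReflectInv_sub hf hlam hx hy⟩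

/-- **Distance comparison for the reflection map on epigraphs** (Lemma A.1): for
`n = d+1 ≥ 2`, a Lipschitz `f : ℝ^{n-1} → ℝ` with Lipschitz constant `M`, the epigraph
`D` supported by `f`, and `λ > 0`, with `Φ_λ⁻¹(x) = (x', f(x') + (1/λ)(f(x') − x_n))`,
there is `C > 0` depending only on `λ` and `M` such that
`|x − y| ≤ C |Φ_λ⁻¹(x) − y|` for all `x, y ∈ D`. -/
theorem dist_comparison_reflection
    (d : ℕ) (hd : 1 ≤ d) (M : ℝ) (hM : 0 ≤ M)
    (f : EuclideanSpace ℝ (Fin d) → ℝ) (hf : LipschitzWith M.toNNReal f)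
    (lam : ℝ) (hlam : 0 < lam) :
    ∃ C : ℝ, 0 < C ∧
      ∀ x ∈ epigraph f, ∀ y ∈ epigraph f,
        ‖x - y‖ ≤
          C * ‖mkPt (fst' x) (f (fst' x) + (1 / lam) * (f (fst' x) - lastc x)) - y‖ :=
  dist_comparison_reflection_general d M f hf lam hlam
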